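/- Let (𝒪,𝒜,T,e,≼) be a Direct Preference Process such that the restriction of ≼ to Dist(Ω^e) is a total consistent preorder. Then there exists a deterministic ≼-optimal policy. -/

import Mathlib

open Finset

/-- A history: an initial observation together with a list of action-observation pairs. -/
abbrev Hist (O A : Type*) := O × List (A × O)

/-- The length (time index) of a history. -/
def hlen {O A : Type*} (h : Hist O A) : ℕ := h.2.length

/-- Append an action-observation pair to a history. -/
def hext {O A : Type*} (h : Hist O A) (a : A) (o : O) : Hist O A :=
  (h.1, h.2 ++ [(a, o)])

/-- The length-`t` prefix of a history/trajectory. -/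
def hpre {O A : Type*} (h : Hist O A) (t : ℕ) : Hist O A := (h.1, h.2.take t)

section DPP

variable {O A : Type*} [Fintype O] [Fintype A] [DecidableEq O] [DecidableEq A]

/-- The finite set of all length-`T` histories (trajectories). -/
def trajFinset (O A : Type*) [Fintype O] [Fintype A] [DecidableEq O] [DecidableEq A]
    (T : ℕ) : Finset (Hist O A) :=
  Finset.image (fun p : O × (Fin T → A × O) => ((p.1, List.ofFn p.2) : Hist O A))
    Finset.univ

/-- `π` is a policy: a distribution over actions for each history. -/
def IsPolicy (π : Hist O A → A → ℝ) : Prop :=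
  ∀ h, (∀ a, 0 ≤ π h a) ∧ ∑ a, π h a = 1

/-- `(ρ0, ρ)` is an environment: an initial observation distribution and
history-dependent transition probabilities. -/
def IsEnv (ρ0 : O → ℝ) (ρ : Hist O A → A → O → ℝ) : Prop :=
  ((∀ o, 0 ≤ ρ0 o) ∧ ∑ o, ρ0 o = 1) ∧
    ∀ h a, (∀ o, 0 ≤ ρ h a o) ∧ ∑ o, ρ h a o = 1

/-- `Dpi ρ π n h` : the distribution over trajectories induced by starting at `h`
(with `n` steps remaining) and following policy `π` in environment `ρ`. -/
noncomputable def Dpi (ρ : Hist O A → A → O → ℝ) (π : Hist O A → A → ℝ) :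
    ℕ → Hist O A → Hist O A → ℝ
  | 0, h, ω => if ω = h then 1 else 0
  | n + 1, h, ω => ∑ a, π h a * ∑ o, ρ h a o * Dpi ρ π n (hext h a o) ω

/-- `D^π(h)` with horizon `T`. -/
noncomputable def DpiH (T : ℕ) (ρ : Hist O A → A → O → ℝ) (π : Hist O A → A → ℝ)
    (h : Hist O A) : Hist O A → ℝ :=
  Dpi ρ π (T - hlen h) h

/-- `D^π(h · a)` : take action `a` at `h`, then follow `π`. -/
noncomputable def DpiA (T : ℕ) (ρ : Hist O A → A → O → ℝ) (π : Hist O A → A → ℝ)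
    (h : Hist O A) (a : A) : Hist O A → ℝ :=
  fun ω => ∑ o, ρ h a o * Dpi ρ π (T - hlen h - 1) (hext h a o) ω

/-- Attainable histories in environment `(ρ0, ρ)`. -/
inductive Attainable (ρ0 : O → ℝ) (ρ : Hist O A → A → O → ℝ) : Hist O A → Prop
  | base (o : O) : 0 < ρ0 o → Attainable ρ0 ρ (o, ([] : List (A × O)))
  | step (h : Hist O A) (a : A) (o : O) :
      Attainable ρ0 ρ h → 0 < ρ h a o → Attainable ρ0 ρ (hext h a o)

/-- A distribution over trajectories (length-`T` histories). -/
def IsTrajDist (T : ℕ) (D : Hist O A → ℝ) : Prop :=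
  (∀ ω, 0 ≤ D ω) ∧ (∀ ω, D ω ≠ 0 → hlen ω = T) ∧
    ∑ ω ∈ trajFinset O A T, D ω = 1

/-- A distribution over the attainable trajectories `Ω^e`. -/
def IsAttDist (T : ℕ) (ρ0 : O → ℝ) (ρ : Hist O A → A → O → ℝ)
    (D : Hist O A → ℝ) : Prop :=
  IsTrajDist T D ∧ ∀ ω, D ω ≠ 0 → Attainable ρ0 ρ ω

/-- Pointwise convex combination. -/
def mix {X : Type*} (α : ℝ) (A B : X → ℝ) : X → ℝ :=
  fun x => α * A x + (1 - α) * B x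

/-- The restriction of `R` to `Dist(Ω^e)` is a total consistent preorder. -/
def RestrTotalConsistentPreorder (T : ℕ) (ρ0 : O → ℝ)
    (ρ : Hist O A → A → O → ℝ) (R : (Hist O A → ℝ) → (Hist O A → ℝ) → Prop) : Prop :=
  (∀ D, IsAttDist T ρ0 ρ D → R D D) ∧
  (∀ D₁ D₂ D₃, IsAttDist T ρ0 ρ D₁ → IsAttDist T ρ0 ρ D₂ → IsAttDist T ρ0 ρ D₃ →
    R D₁ D₂ → R D₂ D₃ → R D₁ D₃) ∧
  (∀ D₁ D₂, IsAttDist T ρ0 ρ D₁ → IsAttDist T ρ0 ρ D₂ → (R D₁ D₂ ∨ R D₂ D₁)) ∧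
  (∀ α : ℝ, 0 < α → α < 1 → ∀ D₁ D₂ D₃, IsAttDist T ρ0 ρ D₁ →
    IsAttDist T ρ0 ρ D₂ → IsAttDist T ρ0 ρ D₃ →
    R D₁ D₂ → R (mix α D₁ D₃) (mix α D₂ D₃))

/-- `π` is a `≼`-optimal policy. -/
def OptimalPolicy (T : ℕ) (ρ0 : O → ℝ) (ρ : Hist O A → A → O → ℝ)
    (R : (Hist O A → ℝ) → (Hist O A → ℝ) → Prop) (π : Hist O A → A → ℝ) : Prop :=
  ∀ h, Attainable ρ0 ρ h → hlen h ≤ T →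
    ∀ π', IsPolicy π' → R (DpiH T ρ π' h) (DpiH T ρ π h)

/-- The optimal action set of policy `π` at history `h`. -/
def OptActions (T : ℕ) (ρ : Hist O A → A → O → ℝ)
    (R : (Hist O A → ℝ) → (Hist O A → ℝ) → Prop) (π : Hist O A → A → ℝ)
    (h : Hist O A) : Set A :=
  {a | ∀ a', R (DpiA T ρ π h a') (DpiA T ρ π h a)}

end DPP

/-!
Backward induction. A total preorder has a maximum on any finite nonempty family, so at each
history some action `a` makes the continuation `D^π(h·a)` maximal. Consistency and transitivity
make `≼` monotone under finite mixtures (split off one component and renormalize the rest), and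
`D^{π'}(h) = ∑ₐ π'(a|h) ∑ₒ ρ(o|h,a) D^{π'}(hao)` is such a mixture. Replacing first every
continuation `D^{π'}(hao)` by that of the deterministic policy built for the later steps, and
then every action by a maximal one, therefore only climbs in `≼`. All distributions involved
live on attainable trajectories, and these form a convex set, so the hypotheses on `≼` apply.
-/

structure IsTotalPreorderOn {X : Type*} (S : Set X) (R : X → X → Prop) : Prop where
  refl : ∀ x ∈ S, R x x
  trans : ∀ x ∈ S, ∀ y ∈ S, ∀ z ∈ S, R x y → R y z → R x z
  total : ∀ x ∈ S, ∀ y ∈ S, R x y ∨ R y x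

structure IsTotalConsistentPreorderOn {E : Type*} [AddCommGroup E] [Module ℝ E]
    (S : Set E) (R : E → E → Prop) : Prop extends IsTotalPreorderOn S R where
  consistent : ∀ α : ℝ, 0 < α → α < 1 → ∀ x ∈ S, ∀ y ∈ S, ∀ z ∈ S,
    R x y → R (α • x + (1 - α) • z) (α • y + (1 - α) • z)

namespace IsTotalPreorderOn

variable {X ι : Type*} {S : Set X} {R : X → X → Prop}

theorem exists_forall_rel (hR : IsTotalPreorderOn S R) {s : Finset ι} (hs : s.Nonempty)
    {f : ι → X} (hf : ∀ i ∈ s, f i ∈ S) : ∃ i ∈ s, ∀ j ∈ s, R (f j) (f i) := by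
  induction hs using Finset.Nonempty.cons_induction with
  | singleton i =>
    refine ⟨i, mem_singleton_self i, fun j hj => ?_⟩
    rw [mem_singleton.1 hj]
    exact hR.refl _ (hf i (mem_singleton_self i))
  | cons i s hi hs ih =>
    have hfs : ∀ j ∈ s, f j ∈ S := fun j hj => hf j (mem_cons_of_mem hj)
    obtain ⟨k, hk, hkmax⟩ := ih hfs
    have hfi := hf i (mem_cons_self i s)
    rcases hR.total _ hfi _ (hfs k hk) with hik | hki
    · refine ⟨k, mem_cons_of_mem hk, fun j hj => ?_⟩
      rcases mem_cons.1 hj with rfl | hj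
      exacts [hik, hkmax j hj]
    · refine ⟨i, mem_cons_self i s, fun j hj => ?_⟩
      rcases mem_cons.1 hj with rfl | hj
      exacts [hR.refl _ hfi, hR.trans _ (hfs j hj) _ (hfs k hk) _ hfi (hkmax j hj) hki]

end IsTotalPreorderOn

theorem Convex.sum_mem_of_pos {E ι : Type*} [AddCommGroup E] [Module ℝ E] {S : Set E}
    (hS : Convex ℝ S) {s : Finset ι} {w : ι → ℝ} {z : ι → E} (hw₀ : ∀ i ∈ s, 0 ≤ w i)
    (hw₁ : ∑ i ∈ s, w i = 1) (hz : ∀ i ∈ s, 0 < w i → z i ∈ S) : ∑ i ∈ s, w i • z i ∈ S := by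
  have hpos : ∀ i ∈ s, w i ≠ 0 → 0 < w i := fun i hi h => (hw₀ i hi).lt_of_ne' h
  rw [← sum_filter_of_ne fun i hi h => hpos i hi (left_ne_zero_of_smul h)]
  refine hS.sum_mem (fun i hi => (mem_filter.1 hi).2.le) (by rwa [sum_filter_of_ne hpos])
    fun i hi => hz i (mem_filter.1 hi).1 (mem_filter.1 hi).2

namespace IsTotalConsistentPreorderOn

variable {E ι : Type*} [AddCommGroup E] [Module ℝ E] {S : Set E} {R : E → E → Prop}

theorem rel_mix (hR : IsTotalConsistentPreorderOn S R) (hS : Convex ℝ S) {α : ℝ}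
    (h₀ : 0 < α) (h₁ : α < 1) {x₁ y₁ x₂ y₂ : E} (hx₁ : x₁ ∈ S) (hy₁ : y₁ ∈ S) (hx₂ : x₂ ∈ S)
    (hy₂ : y₂ ∈ S) (hxy₁ : R x₁ y₁) (hxy₂ : R x₂ y₂) :
    R (α • x₁ + (1 - α) • x₂) (α • y₁ + (1 - α) • y₂) := by
  have hmix : ∀ {x y}, x ∈ S → y ∈ S → α • x + (1 - α) • y ∈ S :=
    fun hx hy => hS hx hy h₀.le (by linarith) (by ring)
  have first := hR.consistent α h₀ h₁ _ hx₁ _ hy₁ _ hx₂ hxy₁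
  have second := hR.consistent (1 - α) (by linarith) (by linarith) _ hx₂ _ hy₂ _ hy₁ hxy₂
  rw [sub_sub_cancel, add_comm, add_comm ((1 - α) • y₂)] at second
  exact hR.trans _ (hmix hx₁ hx₂) _ (hmix hy₁ hx₂) _ (hmix hy₁ hy₂) first second

theorem rel_sum_of_forall_pos (hR : IsTotalConsistentPreorderOn S R) (hS : Convex ℝ S)
    {s : Finset ι} {w : ι → ℝ} (hw : ∀ i ∈ s, 0 < w i) (hw₁ : ∑ i ∈ s, w i = 1)
    {x y : ι → E} (hx : ∀ i ∈ s, x i ∈ S) (hy : ∀ i ∈ s, y i ∈ S)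
    (hxy : ∀ i ∈ s, R (x i) (y i)) : R (∑ i ∈ s, w i • x i) (∑ i ∈ s, w i • y i) := by
  induction s using Finset.cons_induction generalizing w with
  | empty => simp at hw₁
  | cons i s hi ih =>
    rw [sum_cons] at hw₁
    have hxi := hx i (mem_cons_self i s)
    have hyi := hy i (mem_cons_self i s)
    rcases s.eq_empty_or_nonempty with rfl | hs
    · simp only [sum_empty, add_zero] at hw₁
      simpa [hw₁] using hxy i (mem_cons_self i _)
    set t := ∑ j ∈ s, w j
    have ht : 0 < t := sum_pos (fun j hj => hw j (mem_cons_of_mem hj)) hs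
    have hw' : ∀ j ∈ s, 0 < w j / t := fun j hj => div_pos (hw j (mem_cons_of_mem hj)) ht
    have hw'₁ : ∑ j ∈ s, w j / t = 1 := by rw [← sum_div, div_self ht.ne']
    have split : ∀ z : ι → E,
        ∑ j ∈ cons i s hi, w j • z j = w i • z i + (1 - w i) • ∑ j ∈ s, (w j / t) • z j := by
      intro z
      rw [sum_cons, smul_sum]
      congr 1
      refine sum_congr rfl fun j _ => ?_
      rw [smul_smul, show 1 - w i = t by linarith, mul_div_cancel₀ _ ht.ne']
    have memS : ∀ z : ι → E, (∀ j ∈ cons i s hi, z j ∈ S) → ∑ j ∈ s, (w j / t) • z j ∈ S :=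
      fun z hz => hS.sum_mem (fun j hj => (hw' j hj).le) hw'₁ fun j hj => hz j (mem_cons_of_mem hj)
    rw [split x, split y]
    exact hR.rel_mix hS (hw i (mem_cons_self i s)) (by linarith) hxi hyi (memS x hx) (memS y hy)
      (hxy i (mem_cons_self i s))
      (ih hw' hw'₁ (fun j hj => hx j (mem_cons_of_mem hj)) (fun j hj => hy j (mem_cons_of_mem hj))
        fun j hj => hxy j (mem_cons_of_mem hj))

theorem rel_sum (hR : IsTotalConsistentPreorderOn S R) (hS : Convex ℝ S)
    {s : Finset ι} {w : ι → ℝ} (hw₀ : ∀ i ∈ s, 0 ≤ w i) (hw₁ : ∑ i ∈ s, w i = 1)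
    {x y : ι → E} (hx : ∀ i ∈ s, 0 < w i → x i ∈ S) (hy : ∀ i ∈ s, 0 < w i → y i ∈ S)
    (hxy : ∀ i ∈ s, 0 < w i → R (x i) (y i)) : R (∑ i ∈ s, w i • x i) (∑ i ∈ s, w i • y i) := by
  have hpos : ∀ i ∈ s, w i ≠ 0 → 0 < w i := fun i hi h => (hw₀ i hi).lt_of_ne' h
  have hfilter : ∀ z : ι → E, ∑ i ∈ s with 0 < w i, w i • z i = ∑ i ∈ s, w i • z i :=
    fun z => sum_filter_of_ne fun i hi h => hpos i hi (left_ne_zero_of_smul h)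
  rw [← hfilter x, ← hfilter y]
  have hmem : ∀ {i}, i ∈ s.filter (0 < w ·) → i ∈ s ∧ 0 < w i := fun hi => mem_filter.1 hi
  exact hR.rel_sum_of_forall_pos hS (fun i hi => (hmem hi).2)
    (by rwa [sum_filter_of_ne hpos]) (fun i hi => hx i (hmem hi).1 (hmem hi).2)
    (fun i hi => hy i (hmem hi).1 (hmem hi).2) fun i hi => hxy i (hmem hi).1 (hmem hi).2

end IsTotalConsistentPreorderOn

theorem hlen_hext {O A : Type*} (h : Hist O A) (a : A) (o : O) :
    hlen (hext h a o) = hlen h + 1 := by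
  simp [hlen, hext]

def detPolicy {O A : Type*} [DecidableEq A] (σ : Hist O A → A) : Hist O A → A → ℝ :=
  fun h a => if a = σ h then 1 else 0

theorem isPolicy_detPolicy {O A : Type*} [Fintype A] [DecidableEq A] (σ : Hist O A → A) :
    IsPolicy (detPolicy σ) :=
  fun h => ⟨fun a => by unfold detPolicy; positivity, by simp [detPolicy]⟩

section DPP

variable {O A : Type*} [Fintype O] [Fintype A] [DecidableEq O] [DecidableEq A]
  {T : ℕ} {ρ0 : O → ℝ} {ρ : Hist O A → A → O → ℝ} {R : (Hist O A → ℝ) → (Hist O A → ℝ) → Prop}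

theorem mem_trajFinset {ω : Hist O A} (hω : hlen ω = T) : ω ∈ trajFinset O A T := by
  obtain ⟨o, l⟩ := ω
  obtain rfl : l.length = T := hω
  exact mem_image.2 ⟨⟨o, l.get⟩, mem_univ _, by simp⟩

theorem convex_setOf_isAttDist : Convex ℝ {D : Hist O A → ℝ | IsAttDist T ρ0 ρ D} := by
  rintro D₁ ⟨⟨hnn₁, hlen₁, hsum₁⟩, hatt₁⟩ D₂ ⟨⟨hnn₂, hlen₂, hsum₂⟩, hatt₂⟩ a b ha hb hab
  have hsupp : ∀ ω, (a • D₁ + b • D₂) ω ≠ 0 → D₁ ω ≠ 0 ∨ D₂ ω ≠ 0 := by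
    intro ω hω
    by_contra! h
    simp [h] at hω
  refine ⟨⟨fun ω => ?_, fun ω hω => ?_, ?_⟩, fun ω hω => ?_⟩
  · have := hnn₁ ω
    have := hnn₂ ω
    simp only [Pi.add_apply, Pi.smul_apply, smul_eq_mul]
    positivity
  · exact (hsupp ω hω).elim (hlen₁ ω) (hlen₂ ω)
  · simp only [Pi.add_apply, Pi.smul_apply, smul_eq_mul, sum_add_distrib, ← mul_sum, hsum₁,
      hsum₂, mul_one, hab]
  · exact (hsupp ω hω).elim (hatt₁ ω) (hatt₂ ω)

theorem isAttDist_dirac {h : Hist O A} (hatt : Attainable ρ0 ρ h) (hT : hlen h = T) :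
    IsAttDist T ρ0 ρ (fun ω => if ω = h then 1 else 0) := by
  refine ⟨⟨fun ω => by positivity, fun ω hω => ?_, ?_⟩, fun ω hω => ?_⟩
  · rwa [(ite_ne_right_iff.1 hω).1]
  · rw [sum_ite_eq', if_pos (mem_trajFinset hT)]
  · rwa [(ite_ne_right_iff.1 hω).1]

theorem Dpi_succ (π : Hist O A → A → ℝ) (n : ℕ) (h : Hist O A) :
    Dpi ρ π (n + 1) h = ∑ a, π h a • ∑ o, ρ h a o • Dpi ρ π n (hext h a o) := by
  funext ω
  simp [Dpi, Finset.sum_apply]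

theorem Dpi_isAttDist (henv : IsEnv ρ0 ρ) {π : Hist O A → A → ℝ} (hπ : IsPolicy π) (n : ℕ)
    {h : Hist O A} (hatt : Attainable ρ0 ρ h) (hT : hlen h + n = T) :
    IsAttDist T ρ0 ρ (Dpi ρ π n h) := by
  induction n generalizing h with
  | zero => exact isAttDist_dirac hatt hT
  | succ n ih =>
    rw [Dpi_succ]
    refine convex_setOf_isAttDist.sum_mem (fun a _ => (hπ h).1 a) (hπ h).2 fun a _ => ?_
    refine convex_setOf_isAttDist.sum_mem_of_pos (fun o _ => (henv.2 h a).1 o) (henv.2 h a).2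
      fun o _ hpos => ih (hatt.step h a o hpos) ?_
    rw [hlen_hext]
    omega

theorem DpiH_isAttDist (henv : IsEnv ρ0 ρ) {π : Hist O A → A → ℝ} (hπ : IsPolicy π)
    {h : Hist O A} (hatt : Attainable ρ0 ρ h) (hle : hlen h ≤ T) :
    IsAttDist T ρ0 ρ (DpiH T ρ π h) :=
  Dpi_isAttDist henv hπ _ hatt (by omega)

theorem DpiH_eq_of_le (π₁ π₂ : Hist O A → A → ℝ) {h : Hist O A} (hle : T ≤ hlen h) :
    DpiH T ρ π₁ h = DpiH T ρ π₂ h := by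
  simp only [DpiH, Nat.sub_eq_zero_of_le hle]
  rfl

theorem DpiH_eq_sum_DpiA (π : Hist O A → A → ℝ) {h : Hist O A} (hlt : hlen h < T) :
    DpiH T ρ π h = ∑ a, π h a • DpiA T ρ π h a := by
  rw [DpiH, show T - hlen h = T - hlen h - 1 + 1 by omega, Dpi_succ]
  funext ω
  simp [DpiA, Finset.sum_apply]

theorem DpiA_eq_sum_DpiH (π : Hist O A → A → ℝ) (h : Hist O A) (a : A) :
    DpiA T ρ π h a = ∑ o, ρ h a o • DpiH T ρ π (hext h a o) := by
  funext ω
  simp [DpiA, DpiH, hlen_hext, Nat.sub_sub, Finset.sum_apply]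

theorem DpiA_isAttDist (henv : IsEnv ρ0 ρ) {π : Hist O A → A → ℝ} (hπ : IsPolicy π)
    {h : Hist O A} (hatt : Attainable ρ0 ρ h) (hlt : hlen h < T) (a : A) :
    IsAttDist T ρ0 ρ (DpiA T ρ π h a) := by
  rw [DpiA_eq_sum_DpiH]
  refine convex_setOf_isAttDist.sum_mem_of_pos (fun o _ => (henv.2 h a).1 o) (henv.2 h a).2
    fun o _ hpos => DpiH_isAttDist henv hπ (hatt.step h a o hpos) ?_
  rw [hlen_hext]
  omega

theorem Dpi_congr {π₁ π₂ : Hist O A → A → ℝ} (n : ℕ) {h : Hist O A}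
    (hπ : ∀ g, hlen h ≤ hlen g → π₁ g = π₂ g) : Dpi ρ π₁ n h = Dpi ρ π₂ n h := by
  induction n generalizing h with
  | zero => rfl
  | succ n ih =>
    rw [Dpi_succ, Dpi_succ, hπ h le_rfl]
    refine sum_congr rfl fun a _ => congrArg _ (sum_congr rfl fun o _ => ?_)
    rw [ih fun g hg => hπ g (by rw [hlen_hext] at hg; omega)]

theorem DpiH_congr {π₁ π₂ : Hist O A → A → ℝ} {h : Hist O A}
    (hπ : ∀ g, hlen h ≤ hlen g → π₁ g = π₂ g) : DpiH T ρ π₁ h = DpiH T ρ π₂ h :=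
  Dpi_congr _ hπ

theorem DpiA_congr {π₁ π₂ : Hist O A → A → ℝ} {h : Hist O A} (a : A)
    (hπ : ∀ g, hlen h < hlen g → π₁ g = π₂ g) : DpiA T ρ π₁ h a = DpiA T ρ π₂ h a := by
  rw [DpiA_eq_sum_DpiH, DpiA_eq_sum_DpiH]
  refine sum_congr rfl fun o _ => ?_
  rw [DpiH_congr fun g hg => hπ g (by rw [hlen_hext] at hg; omega)]

theorem DpiH_detPolicy (σ : Hist O A → A) {h : Hist O A} (hlt : hlen h < T) :
    DpiH T ρ (detPolicy σ) h = DpiA T ρ (detPolicy σ) h (σ h) := by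
  simp [DpiH_eq_sum_DpiA _ hlt, detPolicy, ite_smul]

theorem RestrTotalConsistentPreorder.isTotalConsistentPreorderOn
    (hR : RestrTotalConsistentPreorder T ρ0 ρ R) :
    IsTotalConsistentPreorderOn {D | IsAttDist T ρ0 ρ D} R where
  refl := hR.1
  trans D₁ h₁ D₂ h₂ D₃ h₃ := hR.2.1 D₁ D₂ D₃ h₁ h₂ h₃
  total D₁ h₁ D₂ h₂ := hR.2.2.1 D₁ D₂ h₁ h₂
  consistent α h₀ h₁ D₁ hD₁ D₂ hD₂ D₃ hD₃ := hR.2.2.2 α h₀ h₁ D₁ D₂ D₃ hD₁ hD₂ hD₃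

theorem exists_forall_mem_OptActions [Nonempty A] (henv : IsEnv ρ0 ρ)
    (hR : IsTotalPreorderOn {D | IsAttDist T ρ0 ρ D} R) {π : Hist O A → A → ℝ}
    (hπ : IsPolicy π) :
    ∃ b : Hist O A → A, ∀ h, Attainable ρ0 ρ h → hlen h < T → b h ∈ OptActions T ρ R π h := by
  have hex : ∀ h, ∃ b, Attainable ρ0 ρ h → hlen h < T → b ∈ OptActions T ρ R π h := by
    intro h
    by_cases hh : Attainable ρ0 ρ h ∧ hlen h < T
    · obtain ⟨b, -, hb⟩ := hR.exists_forall_rel univ_nonempty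
        fun a _ => DpiA_isAttDist henv hπ hh.1 hh.2 a
      exact ⟨b, fun _ _ a => hb a (mem_univ a)⟩
    · exact ⟨Classical.arbitrary A, fun hatt hlt => absurd ⟨hatt, hlt⟩ hh⟩
  choose b hb using hex
  exact ⟨b, hb⟩

variable {π π' : Hist O A → A → ℝ} {h : Hist O A}

theorem rel_DpiA_of_forall_rel_DpiH (henv : IsEnv ρ0 ρ)
    (hR : IsTotalConsistentPreorderOn {D | IsAttDist T ρ0 ρ D} R) (hπ' : IsPolicy π')
    (hπ : IsPolicy π) (hatt : Attainable ρ0 ρ h) (hlt : hlen h < T) (a : A)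
    (hrel : ∀ o, Attainable ρ0 ρ (hext h a o) →
      R (DpiH T ρ π' (hext h a o)) (DpiH T ρ π (hext h a o))) :
    R (DpiA T ρ π' h a) (DpiA T ρ π h a) := by
  have hle : ∀ o, hlen (hext h a o) ≤ T := fun o => by rw [hlen_hext]; omega
  rw [DpiA_eq_sum_DpiH, DpiA_eq_sum_DpiH]
  exact hR.rel_sum convex_setOf_isAttDist (fun o _ => (henv.2 h a).1 o) (henv.2 h a).2
    (fun o _ hpos => DpiH_isAttDist henv hπ' (hatt.step h a o hpos) (hle o))
    (fun o _ hpos => DpiH_isAttDist henv hπ (hatt.step h a o hpos) (hle o))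
    fun o _ hpos => hrel o (hatt.step h a o hpos)

theorem rel_DpiH_of_forall_rel_DpiA (henv : IsEnv ρ0 ρ)
    (hR : IsTotalConsistentPreorderOn {D | IsAttDist T ρ0 ρ D} R) (hπ' : IsPolicy π')
    (hπ : IsPolicy π) (hatt : Attainable ρ0 ρ h) (hlt : hlen h < T)
    (hrel : ∀ a, R (DpiA T ρ π' h a) (DpiA T ρ π h a)) {b : A} (hb : b ∈ OptActions T ρ R π h) :
    R (DpiH T ρ π' h) (DpiA T ρ π h b) := by
  have hS := DpiA_isAttDist henv hπ hatt hlt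
  have hS' := DpiA_isAttDist henv hπ' hatt hlt
  have hmix := hR.rel_sum convex_setOf_isAttDist (s := univ) (w := π' h)
    (y := fun _ => DpiA T ρ π h b)
    (fun a _ => (hπ' h).1 a) (hπ' h).2 (fun a _ _ => hS' a) (fun _ _ _ => hS b)
    fun a _ _ => hR.trans _ (hS' a) _ (hS a) _ (hS b) (hrel a) (hb a)
  rwa [← DpiH_eq_sum_DpiA _ hlt, ← sum_smul, (hπ' h).2, one_smul] at hmix

theorem exists_detPolicy_optimal_of_le_add [Nonempty A] (henv : IsEnv ρ0 ρ)
    (hR : IsTotalConsistentPreorderOn {D | IsAttDist T ρ0 ρ D} R) (n : ℕ) :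
    ∃ σ : Hist O A → A, ∀ h, Attainable ρ0 ρ h → hlen h ≤ T → T ≤ hlen h + n →
      ∀ π', IsPolicy π' → R (DpiH T ρ π' h) (DpiH T ρ (detPolicy σ) h) := by
  induction n with
  | zero =>
    refine ⟨fun _ => Classical.arbitrary A, fun h hatt hle hT π' _ => ?_⟩
    rw [DpiH_eq_of_le π' _ (by omega)]
    exact hR.refl _ (DpiH_isAttDist henv (isPolicy_detPolicy _) hatt hle)
  | succ n ih =>
    obtain ⟨σ, hσ⟩ := ih
    obtain ⟨b, hb⟩ := exists_forall_mem_OptActions henv hR.toIsTotalPreorderOn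
      (isPolicy_detPolicy σ)
    let σ' g := if hlen g + (n + 1) = T then b g else σ g
    have agree : ∀ g, T ≤ hlen g + n → detPolicy σ' g = detPolicy σ g := fun g hg => by
      unfold detPolicy
      rw [show σ' g = σ g from if_neg (by omega)]
    refine ⟨σ', fun h hatt hle hT π' hπ' => ?_⟩
    by_cases hh : hlen h + (n + 1) = T
    · have hlt : hlen h < T := by omega
      rw [DpiH_detPolicy σ' hlt, show σ' h = b h from if_pos hh,
        DpiA_congr _ fun g hg => agree g (by omega)]
      refine rel_DpiH_of_forall_rel_DpiA henv hR hπ' (isPolicy_detPolicy σ) hatt hlt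
        (fun a => ?_) (hb h hatt hlt)
      refine rel_DpiA_of_forall_rel_DpiH henv hR hπ' (isPolicy_detPolicy σ) hatt hlt a
        fun o hatt' => hσ _ hatt' ?_ ?_ π' hπ' <;> rw [hlen_hext] <;> omega
    · rw [DpiH_congr fun g hg => agree g (by omega)]
      exact hσ h hatt hle (by omega) π' hπ'

end DPP

theorem exists_deterministic_optimal_general {O A : Type*} [Fintype O] [Fintype A]
    [DecidableEq O] [DecidableEq A] [Nonempty A]
    (T : ℕ) (ρ0 : O → ℝ) (ρ : Hist O A → A → O → ℝ) (henv : IsEnv ρ0 ρ)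
    (R : (Hist O A → ℝ) → (Hist O A → ℝ) → Prop)
    (hR : RestrTotalConsistentPreorder T ρ0 ρ R) :
    ∃ π : Hist O A → A → ℝ, IsPolicy π ∧
      (∀ h, ∃ a : A, ∀ a', π h a' = if a' = a then 1 else 0) ∧
      OptimalPolicy T ρ0 ρ R π := by
  obtain ⟨σ, hσ⟩ :=
    exists_detPolicy_optimal_of_le_add henv hR.isTotalConsistentPreorderOn T
  exact ⟨detPolicy σ, isPolicy_detPolicy σ, fun h => ⟨σ h, fun _ => rfl⟩,
    fun h hatt hle π' hπ' => hσ h hatt hle (by omega) π' hπ'⟩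

/-- existence of a deterministic optimal policy. -/
theorem exists_deterministic_optimal {O A : Type*} [Fintype O] [Fintype A]
    [DecidableEq O] [DecidableEq A] [Nonempty O] [Nonempty A]
    (T : ℕ) (ρ0 : O → ℝ) (ρ : Hist O A → A → O → ℝ) (henv : IsEnv ρ0 ρ)
    (R : (Hist O A → ℝ) → (Hist O A → ℝ) → Prop)
    (hR : RestrTotalConsistentPreorder T ρ0 ρ R) :
    ∃ π : Hist O A → A → ℝ, IsPolicy π ∧
      (∀ h, ∃ a : A, ∀ a', π h a' = if a' = a then 1 else 0) ∧
      OptimalPolicy T ρ0 ρ R π :=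
  exists_deterministic_optimal_general T ρ0 ρ henv R hR
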